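/- arXiv:1606.08927 — 7 statements merged into one kernel-verified Lean document; each statement's English description precedes it below -/
import Mathlib

section
/- In the clique lossless coupled network G of a multiplex system G^{1..k}, suppose the LT propagation process in G starts from a seed set S' consisting only of gateway vertices. Then gateway vertices become active only at even propagation hops; that is, for every user u and every odd t ≥ 1, if the gateway vertex u^0 belongs to A^t(G,S') then u^0 already belongs to A^{t-1}(G,S'). -/
open scoped Classical

/-- LT active sets on a single directed weighted network `G = (V, w, θ)`:
`ltIter w θ S 0 = S` and
`ltIter w θ S (t+1) = ltIter w θ S t ∪ { x | Σ_{y ∈ A^t} w y x ≥ θ x }`. -/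
noncomputable def ltIter {V : Type*} [Fintype V] [DecidableEq V]
    (w : V → V → ℝ) (θ : V → ℝ) (S : Finset V) : ℕ → Finset V
  | 0 => S
  | t + 1 =>
      ltIter w θ S t ∪
        Finset.univ.filter (fun x => θ x ≤ ∑ y ∈ ltIter w θ S t, w y x)

/-- LT active sets on the multiplex system `G^{1..k}`:
`A^0 = S` and `A^{t+1} = A^t ∪ { u | ∃ i, Σ_{v ∈ A^t} w^i v u ≥ θ^i u }`. -/
noncomputable def multiIter {U : Type*} [Fintype U] [DecidableEq U] {k : ℕ}
    (w : Fin k → U → U → ℝ) (θ : Fin k → U → ℝ) (S : Finset U) : ℕ → Finset U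
  | 0 => S
  | t + 1 =>
      multiIter w θ S t ∪
        Finset.univ.filter
          (fun u => ∃ i : Fin k, θ i u ≤ ∑ v ∈ multiIter w θ S t, w i v u)

/-- Thresholds of the clique lossless coupled network.  The vertex `(u, none)` is the
gateway vertex `u⁰` (threshold 1), and `(u, some i)` is the representative vertex `uⁱ`
(threshold `θ^i(u)` if `u ∈ V^i`, and 1 otherwise, i.e. for dummy vertices). -/
noncomputable def cliqueTheta {U : Type*} [DecidableEq U] {k : ℕ}
    (Vmem : Fin k → Finset U) (θ : Fin k → U → ℝ) : U × Option (Fin k) → ℝ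
  | (_, none) => 1
  | (u, some i) => if u ∈ Vmem i then θ i u else 1

/-- Edge weights of the clique lossless coupled network:
`w(u⁰, vⁱ) = w^i(u, v)` for users `u ≠ v` and `1 ≤ i ≤ k`;
`w(uⁱ, uʲ) = θ(uʲ)` for all `0 ≤ i ≠ j ≤ k` (synchronization clique);
all other weights are 0. -/
noncomputable def cliqueW {U : Type*} [DecidableEq U] {k : ℕ}
    (Vmem : Fin k → Finset U) (w : Fin k → U → U → ℝ) (θ : Fin k → U → ℝ) :
    U × Option (Fin k) → U × Option (Fin k) → ℝ :=
  fun x y =>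
    if x.1 = y.1 then
      if x.2 = y.2 then 0 else cliqueTheta Vmem θ y
    else
      match x.2, y.2 with
      | none, some i => w i x.1 y.1
      | _, _ => 0

lemma mem_ltIter_succ {V : Type*} [Fintype V] [DecidableEq V]
    (w : V → V → ℝ) (θ : V → ℝ) (S : Finset V) (t : ℕ) (x : V) :
    x ∈ ltIter w θ S (t+1) ↔
      x ∈ ltIter w θ S t ∨ θ x ≤ ∑ y ∈ ltIter w θ S t, w y x := by
  simp [ltIter]

lemma ltIter_subset_succ {V : Type*} [Fintype V] [DecidableEq V]
    (w : V → V → ℝ) (θ : V → ℝ) (S : Finset V) (t : ℕ) :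
    ltIter w θ S t ⊆ ltIter w θ S (t+1) := by
  intro x hx
  rw [mem_ltIter_succ]
  exact Or.inl hx

lemma ltIter_mono {V : Type*} [Fintype V] [DecidableEq V]
    (w : V → V → ℝ) (θ : V → ℝ) (S : Finset V) {s t : ℕ} (h : s ≤ t) :
    ltIter w θ S s ⊆ ltIter w θ S t := by
  induction t with
  | zero =>
    have : s = 0 := by omega
    subst this; exact Finset.Subset.refl _
  | succ n ih =>
    rcases Nat.lt_or_ge s (n+1) with h' | h'
    · exact (ih (by omega)).trans (ltIter_subset_succ w θ S n)
    · have : s = n + 1 := by omega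
      subst this; exact Finset.Subset.refl _

lemma cliqueTheta_pos {U : Type*} [DecidableEq U] {k : ℕ}
    (Vmem : Fin k → Finset U) (θ : Fin k → U → ℝ) (hθpos : ∀ i u, 0 < θ i u)
    (x : U × Option (Fin k)) : 0 < cliqueTheta Vmem θ x := by
  obtain ⟨a, o⟩ := x
  cases o with
  | none => norm_num [cliqueTheta]
  | some i =>
    simp only [cliqueTheta]
    split
    · exact hθpos i a
    · norm_num

lemma cliqueW_nonneg {U : Type*} [DecidableEq U] {k : ℕ}
    (Vmem : Fin k → Finset U) (w : Fin k → U → U → ℝ) (θ : Fin k → U → ℝ)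
    (hw0 : ∀ i v u, 0 ≤ w i v u) (hθpos : ∀ i u, 0 < θ i u)
    (x y : U × Option (Fin k)) : 0 ≤ cliqueW Vmem w θ x y := by
  obtain ⟨a, o⟩ := x; obtain ⟨b, p⟩ := y
  unfold cliqueW
  split
  · split
    · exact le_refl 0
    · exact (cliqueTheta_pos Vmem θ hθpos _).le
  · cases o <;> cases p <;> simp [hw0]

lemma cliqueW_gateway {U : Type*} [DecidableEq U] {k : ℕ}
    (Vmem : Fin k → Finset U) (w : Fin k → U → U → ℝ) (θ : Fin k → U → ℝ)
    (v : U) (o : Option (Fin k)) (u : U) :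
    cliqueW Vmem w θ (v, o) (u, none) = if v = u ∧ o ≠ none then 1 else 0 := by
  cases o <;> by_cases h : v = u <;> simp [cliqueW, cliqueTheta, h]

section Main

variable {U : Type*} [Fintype U] [DecidableEq U] {k : ℕ}
  (Vmem : Fin k → Finset U) (w : Fin k → U → U → ℝ) (θ : Fin k → U → ℝ)
  (hw0 : ∀ i v u, 0 ≤ w i v u) (hθpos : ∀ i u, 0 < θ i u)
  (S' : Finset (U × Option (Fin k)))

include hw0 hθpos

/-- Any active representative of `u` activates the gateway `u⁰` one step later. -/
lemma rep_act (u : U) (j : Fin k) (s : ℕ)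
    (h : (u, some j) ∈ ltIter (cliqueW Vmem w θ) (cliqueTheta Vmem θ) S' s) :
    (u, (none : Option (Fin k))) ∈
      ltIter (cliqueW Vmem w θ) (cliqueTheta Vmem θ) S' (s+1) := by
  rw [mem_ltIter_succ]
  right
  have h1 : cliqueTheta Vmem θ (u, (none : Option (Fin k))) = 1 := rfl
  rw [h1]
  have h2 : cliqueW Vmem w θ (u, some j) (u, (none : Option (Fin k))) = 1 := by
    rw [cliqueW_gateway]; simp
  calc (1 : ℝ) = cliqueW Vmem w θ (u, some j) (u, none) := h2.symm
    _ ≤ _ := Finset.single_le_sum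
        (fun y _ => cliqueW_nonneg Vmem w θ hw0 hθpos y (u, none)) h

/-- If no representative activates it, a gateway stays inactive: a gateway active
at step `s+1` was already active at step `s`, assuming the invariant at `s`. -/
lemma gw_step (s : ℕ)
    (hE : ∀ v : U, (∃ i, (v, some i) ∈
        ltIter (cliqueW Vmem w θ) (cliqueTheta Vmem θ) S' s) →
      (v, (none : Option (Fin k))) ∈
        ltIter (cliqueW Vmem w θ) (cliqueTheta Vmem θ) S' s)
    (v : U)
    (hv : (v, (none : Option (Fin k))) ∈
        ltIter (cliqueW Vmem w θ) (cliqueTheta Vmem θ) S' (s+1)) :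
    (v, (none : Option (Fin k))) ∈
      ltIter (cliqueW Vmem w θ) (cliqueTheta Vmem θ) S' s := by
  rw [mem_ltIter_succ] at hv
  rcases hv with h | h
  · exact h
  · have h1 : cliqueTheta Vmem θ (v, (none : Option (Fin k))) = 1 := rfl
    rw [h1] at h
    have hy : ∃ y ∈ ltIter (cliqueW Vmem w θ) (cliqueTheta Vmem θ) S' s,
        cliqueW Vmem w θ y (v, none) ≠ 0 := by
      by_contra hc
      push_neg at hc
      have hz : ∑ y ∈ ltIter (cliqueW Vmem w θ) (cliqueTheta Vmem θ) S' s,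
          cliqueW Vmem w θ y (v, none) = 0 := Finset.sum_eq_zero hc
      rw [hz] at h
      linarith
    obtain ⟨⟨a, o⟩, hmem, hne⟩ := hy
    rw [cliqueW_gateway] at hne
    by_cases hav : a = v ∧ o ≠ none
    · obtain ⟨rfl, ho⟩ := hav
      cases o with
      | none => exact absurd rfl ho
      | some j => exact hE a ⟨j, hmem⟩
    · simp [hav] at hne

/-- The parity invariant: at even times, any active representative of `u`
forces the gateway `u⁰` to be active. -/
lemma keyE (hS' : ∀ x ∈ S', x.2 = (none : Option (Fin k))) :
    ∀ m : ℕ, ∀ u : U,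
      (∃ i, (u, some i) ∈ ltIter (cliqueW Vmem w θ) (cliqueTheta Vmem θ) S' (2*m)) →
      (u, (none : Option (Fin k))) ∈
        ltIter (cliqueW Vmem w θ) (cliqueTheta Vmem θ) S' (2*m) := by
  intro m
  induction m with
  | zero =>
    intro u ⟨i, hi⟩
    have : ((u, some i) : U × Option (Fin k)).2 = none := hS' _ hi
    simp at this
  | succ m ih =>
    intro u ⟨i, hi⟩
    have h22 : 2 * (m + 1) = 2 * m + 1 + 1 := by ring
    rw [h22] at hi ⊢
    rw [mem_ltIter_succ] at hi
    rcases hi with hi | hi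
    · -- u's representative already active at odd time 2m+1
      exact rep_act Vmem w θ hw0 hθpos S' u i _ hi
    · -- uⁱ crosses its threshold at step 2m+2
      by_cases hcl : ∃ o : Option (Fin k),
          (u, o) ∈ ltIter (cliqueW Vmem w θ) (cliqueTheta Vmem θ) S' (2*m+1)
      · obtain ⟨o, ho⟩ := hcl
        cases o with
        | none =>
          have := gw_step Vmem w θ hw0 hθpos S' (2*m) (ih) u ho
          exact ltIter_mono _ _ _ (by omega) this
        | some j =>
          exact rep_act Vmem w θ hw0 hθpos S' u j _ ho
      · push_neg at hcl
        -- no vertex of user u is active at time 2m+1, so the incoming sum at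
        -- time 2m+1 equals the one at time 2m, whence uⁱ was already active
        -- at 2m+1: contradiction.
        exfalso
        have hsum : ∑ y ∈ ltIter (cliqueW Vmem w θ) (cliqueTheta Vmem θ) S' (2*m+1),
            cliqueW Vmem w θ y (u, some i)
            = ∑ y ∈ ltIter (cliqueW Vmem w θ) (cliqueTheta Vmem θ) S' (2*m),
            cliqueW Vmem w θ y (u, some i) := by
          refine (Finset.sum_subset (ltIter_subset_succ _ _ _ _) ?_).symm
          intro y hy hny
          obtain ⟨b, p⟩ := y
          by_cases hbu : b = u
          · exact absurd (hbu ▸ hy) (hcl p)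
          · cases p with
            | some j => simp [cliqueW, hbu]
            | none =>
              have := gw_step Vmem w θ hw0 hθpos S' (2*m) (ih) b hy
              exact absurd this hny
        rw [hsum] at hi
        have : (u, some i) ∈ ltIter (cliqueW Vmem w θ) (cliqueTheta Vmem θ) S' (2*m+1) := by
          rw [mem_ltIter_succ]; exact Or.inr hi
        exact hcl (some i) this

end Main

/-- In the clique lossless coupled network, if the LT propagation
starts from a seed set consisting only of gateway vertices, then gateway vertices
become active only at even propagation hops: for every user `u` and odd `t`, if
`u⁰ ∈ A^t(G, S')` then `u⁰ ∈ A^{t-1}(G, S')`. -/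
theorem gateway_active_only_at_even_hops
    {U : Type*} [Fintype U] [DecidableEq U] {k : ℕ} (hk : 1 ≤ k)
    (Vmem : Fin k → Finset U) (w : Fin k → U → U → ℝ) (θ : Fin k → U → ℝ)
    (hw0 : ∀ i v u, 0 ≤ w i v u)
    (hwV : ∀ i v u, v ∉ Vmem i ∨ u ∉ Vmem i → w i v u = 0)
    (hθpos : ∀ i u, 0 < θ i u)
    (S' : Finset (U × Option (Fin k)))
    (hS' : ∀ x ∈ S', x.2 = (none : Option (Fin k)))
    (u : U) (t : ℕ) (ht : Odd t)
    (hu : (u, (none : Option (Fin k))) ∈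
      ltIter (cliqueW Vmem w θ) (cliqueTheta Vmem θ) S' t) :
    (u, (none : Option (Fin k))) ∈
      ltIter (cliqueW Vmem w θ) (cliqueTheta Vmem θ) S' (t - 1) := by
  obtain ⟨m, rfl⟩ := ht
  have h1 : 2 * m + 1 - 1 = 2 * m := by omega
  rw [h1]
  exact gw_step Vmem w θ hw0 hθpos S' (2*m)
    (keyE Vmem w θ hw0 hθpos S' hS' m) u hu
end

section
/- Let the LT propagation on the clique lossless coupled network G of a multiplex system G^{1..k} start from S' = { s^0 : s ∈ S } for a seed set S ⊆ U. Then for every d ≥ 1 and every user u, if there exists i ∈ {1,…,k} with the representative vertex u^i in A^{2d-1}(G,S'), then the gateway vertex u^0 belongs to A^{2d}(G,S'). -/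
open scoped Classical

/-- If the LT propagation on the clique lossless coupled network
starts from `S' = { s⁰ : s ∈ S }`, then for every `d ≥ 1` and every user `u`, if
some representative vertex `uⁱ` belongs to `A^{2d-1}(G, S')`, then the gateway
vertex `u⁰` belongs to `A^{2d}(G, S')`. -/
theorem rep_active_implies_gateway_active
    {U : Type*} [Fintype U] [DecidableEq U] {k : ℕ} (hk : 1 ≤ k)
    (Vmem : Fin k → Finset U) (w : Fin k → U → U → ℝ) (θ : Fin k → U → ℝ)
    (hw0 : ∀ i v u, 0 ≤ w i v u)
    (hwV : ∀ i v u, v ∉ Vmem i ∨ u ∉ Vmem i → w i v u = 0)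
    (hθpos : ∀ i u, 0 < θ i u)
    (S : Finset U) (d : ℕ) (hd : 1 ≤ d) (u : U)
    (hu : ∃ i : Fin k, (u, (some i : Option (Fin k))) ∈
      ltIter (cliqueW Vmem w θ) (cliqueTheta Vmem θ)
        (S.image (fun s => (s, (none : Option (Fin k))))) (2 * d - 1)) :
    (u, (none : Option (Fin k))) ∈
      ltIter (cliqueW Vmem w θ) (cliqueTheta Vmem θ)
        (S.image (fun s => (s, (none : Option (Fin k))))) (2 * d) := by
  obtain ⟨i, hi⟩ := hu
  have h2d : 2 * d = (2 * d - 1) + 1 := by omega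
  rw [h2d, ltIter]
  apply Finset.mem_union_right
  simp only [Finset.mem_filter, Finset.mem_univ, true_and]
  have hθ1 : cliqueTheta Vmem θ (u, (none : Option (Fin k))) = 1 := rfl
  rw [hθ1]
  have hterm : cliqueW Vmem w θ (u, (some i : Option (Fin k))) (u, none) = 1 := by
    simp [cliqueW, cliqueTheta]
  calc (1 : ℝ) = cliqueW Vmem w θ (u, (some i : Option (Fin k))) (u, none) := hterm.symm
    _ ≤ _ := by
        apply Finset.single_le_sum (f := fun y => cliqueW Vmem w θ y (u, none)) _ hi
        intro y _
        rcases y with ⟨v, j⟩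
        simp only [cliqueW]
        rcases j with _ | j <;> split_ifs <;> simp [cliqueTheta]
end

section
/- Let the LT propagation on the multiplex system G^{1..k} start from a seed set S ⊆ U and the LT propagation on its clique lossless coupled network G start from S' = { s^0 : s ∈ S }. Then for every d ≥ 1 and every user u, if the gateway vertex u^0 belongs to A^{2d}(G,S'), then u ∈ A^d(G^{1..k},S). -/
open scoped Classical

lemma multiIter_mono {U : Type*} [Fintype U] [DecidableEq U] {k : ℕ}
    (w : Fin k → U → U → ℝ) (θ : Fin k → U → ℝ) (S : Finset U)
    {a b : ℕ} (h : a ≤ b) : multiIter w θ S a ⊆ multiIter w θ S b := by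
  induction b with
  | zero => simp [Nat.le_zero.mp h]
  | succ b ih =>
      rcases Nat.lt_or_ge a (b + 1) with h' | h'
      · refine (ih (Nat.lt_succ_iff.mp h')).trans ?_
        rw [multiIter]
        exact Finset.subset_union_left
      · have : a = b + 1 := le_antisymm h h'
        subst this; exact subset_rfl

lemma clique_key {U : Type*} [Fintype U] [DecidableEq U] {k : ℕ}
    (Vmem : Fin k → Finset U) (w : Fin k → U → U → ℝ) (θ : Fin k → U → ℝ)
    (hw0 : ∀ i v u, 0 ≤ w i v u)
    (hwV : ∀ i v u, v ∉ Vmem i ∨ u ∉ Vmem i → w i v u = 0)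
    (S : Finset U) :
    ∀ t : ℕ,
      (∀ u : U, (u, (none : Option (Fin k))) ∈
          ltIter (cliqueW Vmem w θ) (cliqueTheta Vmem θ)
            (S.image (fun s => (s, (none : Option (Fin k))))) t →
        u ∈ multiIter w θ S ((t + 1) / 2)) ∧
      (∀ u : U, ∀ i : Fin k, (u, some i) ∈
          ltIter (cliqueW Vmem w θ) (cliqueTheta Vmem θ)
            (S.image (fun s => (s, (none : Option (Fin k))))) t →
        u ∈ multiIter w θ S ((t + 2) / 2)) := by
  intro t
  induction t with
  | zero =>
      constructor
      · intro u hu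
        simp only [ltIter, Finset.mem_image] at hu
        obtain ⟨s, hs, heq⟩ := hu
        have : s = u := (Prod.ext_iff.mp heq).1
        subst this
        simpa [multiIter] using hs
      · intro u i hu
        simp only [ltIter, Finset.mem_image] at hu
        obtain ⟨s, _, heq⟩ := hu
        exact absurd (Prod.ext_iff.mp heq).2 (by simp)
  | succ t ih =>
      set Lt := ltIter (cliqueW Vmem w θ) (cliqueTheta Vmem θ)
          (S.image (fun s => (s, (none : Option (Fin k))))) t with hLt
      constructor
      · intro u hu
        simp only [ltIter, Finset.mem_union, Finset.mem_filter, Finset.mem_univ,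
          true_and, ← hLt] at hu
        rcases hu with hu | hu
        · exact multiIter_mono w θ S (by omega) (ih.1 u hu)
        · -- threshold of gateway is 1; some representative of u must be active
          have hθ1 : cliqueTheta Vmem θ (u, (none : Option (Fin k))) = 1 := rfl
          rw [hθ1] at hu
          have hex : ∃ i : Fin k, (u, some i) ∈ Lt := by
            by_contra hno
            push_neg at hno
            have hz : ∑ y ∈ Lt, cliqueW Vmem w θ y (u, (none : Option (Fin k))) = 0 := by
              refine Finset.sum_eq_zero ?_
              rintro ⟨v, o⟩ hy
              by_cases hv : v = u
              · subst hv
                cases o with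
                | none => simp [cliqueW]
                | some j => exact absurd hy (hno j)
              · cases o <;> simp [cliqueW, hv]
            rw [hz] at hu
            linarith
          obtain ⟨i, hi⟩ := hex
          have := ih.2 u i hi
          exact multiIter_mono w θ S (by omega) this
      · intro u i hu
        simp only [ltIter, Finset.mem_union, Finset.mem_filter, Finset.mem_univ,
          true_and, ← hLt] at hu
        rcases hu with hu | hu
        · exact multiIter_mono w θ S (by omega) (ih.2 u i hu)
        · by_cases hsame : ∃ y ∈ Lt, y.1 = u
          · obtain ⟨⟨v, o⟩, hy, hv⟩ := hsame
            dsimp at hv; subst hv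
            cases o with
            | none => exact multiIter_mono w θ S (by omega) (ih.1 v hy)
            | some j => exact multiIter_mono w θ S (by omega) (ih.2 v j hy)
          · push_neg at hsame
            set F := Lt.filter (fun y => y.2 = (none : Option (Fin k))) with hF
            have e1 : ∀ y ∈ Lt, cliqueW Vmem w θ y (u, some i)
                = if y.2 = (none : Option (Fin k)) then w i y.1 u else 0 := by
              rintro ⟨v, o⟩ hy
              have hv : v ≠ u := hsame _ hy
              cases o <;> simp [cliqueW, hv]
            have hsum : ∑ y ∈ Lt, cliqueW Vmem w θ y (u, some i)
                = ∑ v ∈ F.image Prod.fst, w i v u := by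
              have hinj : ∀ x ∈ F, ∀ y ∈ F, x.1 = y.1 → x = y := by
                rintro ⟨a, oa⟩ ha ⟨b, ob⟩ hb hab
                simp only [hF, Finset.mem_filter] at ha hb
                dsimp at hab
                exact Prod.ext hab (ha.2.trans hb.2.symm)
              have h2 : ∑ v ∈ F.image Prod.fst, w i v u = ∑ y ∈ F, w i y.1 u :=
                Finset.sum_image hinj
              have h3 : ∑ y ∈ F, w i y.1 u
                  = ∑ y ∈ Lt, if y.2 = (none : Option (Fin k)) then w i y.1 u else 0 := by
                rw [hF]; exact Finset.sum_filter _ _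
              rw [Finset.sum_congr rfl e1, ← h3, ← h2]
            have hsub : F.image Prod.fst ⊆ multiIter w θ S ((t + 1) / 2) := by
              intro v hv
              obtain ⟨y, hyF, rfl⟩ := Finset.mem_image.mp hv
              simp only [hF, Finset.mem_filter] at hyF
              have hy' : (y.1, (none : Option (Fin k))) ∈ Lt := by
                have : y = (y.1, (none : Option (Fin k))) := Prod.ext rfl hyF.2
                exact this ▸ hyF.1
              exact ih.1 y.1 hy'
            have hle : ∑ v ∈ F.image Prod.fst, w i v u
                ≤ ∑ v ∈ multiIter w θ S ((t + 1) / 2), w i v u :=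
              Finset.sum_le_sum_of_subset_of_nonneg hsub (fun v _ _ => hw0 i v u)
            by_cases hmem : u ∈ Vmem i
            · have hθ : cliqueTheta Vmem θ (u, some i) = θ i u := by
                simp [cliqueTheta, hmem]
              rw [hθ, hsum] at hu
              have hthr : θ i u ≤ ∑ v ∈ multiIter w θ S ((t + 1) / 2), w i v u :=
                le_trans hu hle
              have hmem2 : u ∈ multiIter w θ S ((t + 1) / 2 + 1) := by
                rw [multiIter]
                exact Finset.mem_union_right _
                  (Finset.mem_filter.mpr ⟨Finset.mem_univ _, ⟨i, hthr⟩⟩)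
              exact multiIter_mono w θ S (by omega) hmem2
            · exfalso
              have hθ : cliqueTheta Vmem θ (u, some i) = 1 := by
                simp [cliqueTheta, hmem]
              rw [hθ, hsum] at hu
              have hz : ∑ v ∈ F.image Prod.fst, w i v u = 0 :=
                Finset.sum_eq_zero (fun v _ => hwV i v u (Or.inr hmem))
              rw [hz] at hu
              linarith

/-- If the LT propagation on the multiplex system starts from `S`
and the propagation on its clique lossless coupled network starts from
`S' = { s⁰ : s ∈ S }`, then for every `d ≥ 1` and every user `u`, if the gateway
vertex `u⁰` belongs to `A^{2d}(G, S')`, then `u ∈ A^d(G^{1..k}, S)`. -/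
theorem gateway_active_implies_multi_active
    {U : Type*} [Fintype U] [DecidableEq U] {k : ℕ} (hk : 1 ≤ k)
    (Vmem : Fin k → Finset U) (w : Fin k → U → U → ℝ) (θ : Fin k → U → ℝ)
    (hw0 : ∀ i v u, 0 ≤ w i v u)
    (hwV : ∀ i v u, v ∉ Vmem i ∨ u ∉ Vmem i → w i v u = 0)
    (hθpos : ∀ i u, 0 < θ i u)
    (S : Finset U) (d : ℕ) (hd : 1 ≤ d) (u : U)
    (hu : (u, (none : Option (Fin k))) ∈
      ltIter (cliqueW Vmem w θ) (cliqueTheta Vmem θ)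
        (S.image (fun s => (s, (none : Option (Fin k))))) (2 * d)) :
    u ∈ multiIter w θ S d := by
  have h := (clique_key Vmem w θ hw0 hwV S (2 * d)).1 u hu
  have : (2 * d + 1) / 2 = d := by omega
  rwa [this] at h
end

section
/- Let the LT propagation on the multiplex system G^{1..k} start from a seed set S ⊆ U and the LT propagation on its clique lossless coupled network G start from S' = { s^0 : s ∈ S }. Then for every d ≥ 1, the number of active vertices in the coupled network after 2d hops is exactly (k+1) times the number of active users in the multiplex system after d hops: |A^{2d}(G,S')| = (k+1)·|A^d(G^{1..k},S)| (the scale-up property of the clique lossless coupling scheme with constant c = k+1). -/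
open scoped Classical

section Aux

variable {U : Type*} [Fintype U] [DecidableEq U] {k : ℕ}
variable (Vmem : Fin k → Finset U) (w : Fin k → U → U → ℝ) (θ : Fin k → U → ℝ)

noncomputable def cstep (T : Finset (U × Option (Fin k))) : Finset (U × Option (Fin k)) :=
  T ∪ Finset.univ.filter
      (fun x => cliqueTheta Vmem θ x ≤ ∑ y ∈ T, cliqueW Vmem w θ y x)

noncomputable def mstep (M : Finset U) : Finset U :=
  M ∪ Finset.univ.filter (fun u => ∃ i, θ i u ≤ ∑ v ∈ M, w i v u)

lemma ltIter_eq_iterate (S : Finset (U × Option (Fin k))) (t : ℕ) :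
    ltIter (cliqueW Vmem w θ) (cliqueTheta Vmem θ) S t = (cstep Vmem w θ)^[t] S := by
  induction t with
  | zero => simp [ltIter]
  | succ t ih => rw [Function.iterate_succ_apply', ← ih]; simp [ltIter, cstep]

lemma multiIter_eq_iterate (S : Finset U) (t : ℕ) :
    multiIter w θ S t = (mstep w θ)^[t] S := by
  induction t with
  | zero => simp [multiIter]
  | succ t ih => rw [Function.iterate_succ_apply', ← ih]; simp [multiIter, mstep]

variable (hw0 : ∀ i v u, 0 ≤ w i v u)
    (hwV : ∀ i v u, v ∉ Vmem i ∨ u ∉ Vmem i → w i v u = 0)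
    (hθpos : ∀ i u, 0 < θ i u)

include hθpos in
lemma cθ_nonneg (x : U × Option (Fin k)) : 0 ≤ cliqueTheta Vmem θ x := by
  obtain ⟨u, c⟩ := x
  cases c with
  | none => simp [cliqueTheta]
  | some i =>
    simp only [cliqueTheta]
    split_ifs
    · exact (hθpos i u).le
    · norm_num

include hw0 hθpos in
lemma cw_nonneg (x y : U × Option (Fin k)) : 0 ≤ cliqueW Vmem w θ x y := by
  obtain ⟨u, c⟩ := x; obtain ⟨v, c'⟩ := y
  simp only [cliqueW]
  split_ifs
  · exact le_refl 0
  · exact cθ_nonneg Vmem θ hθpos _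
  · cases c <;> cases c' <;> simp [hw0]

lemma cw_from_rep (u : U) (j : Fin k) (y : U × Option (Fin k)) (h : u ≠ y.1) :
    cliqueW Vmem w θ (u, some j) y = 0 := by
  obtain ⟨v, c⟩ := y
  cases c <;> simp [cliqueW, h]

lemma cw_to_gateway (y : U × Option (Fin k)) (v : U) (h : y.1 ≠ v) :
    cliqueW Vmem w θ y (v, none) = 0 := by
  obtain ⟨u, c⟩ := y
  cases c <;> simp [cliqueW, h]

lemma cw_gateway_rep (u v : U) (i : Fin k) (h : u ≠ v) :
    cliqueW Vmem w θ (u, none) (v, some i) = w i u v := by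
  simp [cliqueW, h]

lemma cw_same_user (v : U) (c c' : Option (Fin k)) (h : c ≠ c') :
    cliqueW Vmem w θ (v, c) (v, c') = cliqueTheta Vmem θ (v, c') := by
  simp [cliqueW, h]

lemma sum_prod_rep (M : Finset U) (v : U) (i : Fin k) (hv : v ∉ M) :
    ∑ y ∈ M ×ˢ (Finset.univ : Finset (Option (Fin k))), cliqueW Vmem w θ y (v, some i)
      = ∑ u ∈ M, w i u v := by
  rw [Finset.sum_product]
  refine Finset.sum_congr rfl fun u hu => ?_
  have huv : u ≠ v := fun h => hv (h ▸ hu)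
  rw [Fintype.sum_option]
  have h2 : ∀ j : Fin k, cliqueW Vmem w θ (u, some j) (v, some i) = 0 :=
    fun j => cw_from_rep Vmem w θ u j (v, some i) huv
  simp [h2, cw_gateway_rep Vmem w θ u v i huv]

lemma sum_prod_gateway (M : Finset U) (v : U) (hv : v ∉ M) :
    ∑ y ∈ M ×ˢ (Finset.univ : Finset (Option (Fin k))), cliqueW Vmem w θ y (v, none) = 0 := by
  refine Finset.sum_eq_zero fun y hy => ?_
  rw [Finset.mem_product] at hy
  exact cw_to_gateway Vmem w θ y v (fun h => hv (h ▸ hy.1))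

include hwV hθpos in
lemma theta_cond_iff (M : Finset U) (v : U) (i : Fin k) :
    cliqueTheta Vmem θ (v, some i) ≤ ∑ u ∈ M, w i u v ↔ θ i v ≤ ∑ u ∈ M, w i u v := by
  by_cases hvm : v ∈ Vmem i
  · simp [cliqueTheta, hvm]
  · have hz : ∑ u ∈ M, w i u v = 0 :=
      Finset.sum_eq_zero fun u _ => hwV i u v (Or.inr hvm)
    rw [hz]
    simp only [cliqueTheta, hvm, if_false]
    exact iff_of_false (by norm_num) (by linarith [hθpos i v])

noncomputable def newReps (M : Finset U) : Finset (U × Option (Fin k)) :=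
  Finset.univ.filter
    (fun x => ∃ i, x.2 = some i ∧ θ i x.1 ≤ ∑ u ∈ M, w i u x.1)

lemma newReps_sub (M : Finset U) :
    newReps w θ M ⊆ (mstep w θ M) ×ˢ Finset.univ := by
  rintro ⟨v, c⟩ h
  simp only [newReps, Finset.mem_filter, Finset.mem_univ, true_and] at h
  obtain ⟨i, hc, hle⟩ := h
  simp only [Finset.mem_product, Finset.mem_univ, and_true, mstep, Finset.mem_union,
    Finset.mem_filter, true_and]
  exact Or.inr ⟨i, hle⟩

include hwV hθpos in
lemma cstep_prod (M : Finset U) :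
    cstep Vmem w θ (M ×ˢ Finset.univ) = M ×ˢ Finset.univ ∪ newReps w θ M := by
  ext ⟨v, c⟩
  by_cases hv : v ∈ M
  · simp [cstep, hv, Finset.mem_union, Finset.mem_product]
  · cases c with
    | none =>
      rw [cstep, Finset.mem_union, Finset.mem_union]
      rw [Finset.mem_filter]
      rw [sum_prod_gateway Vmem w θ M v hv]
      simp [cliqueTheta, newReps, hv]
    | some i =>
      rw [cstep, Finset.mem_union, Finset.mem_union, Finset.mem_filter,
        sum_prod_rep Vmem w θ M v i hv, theta_cond_iff Vmem w θ hwV hθpos M v i]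
      simp [newReps, hv]

include hw0 hwV hθpos in
lemma cstep2_prod (M : Finset U) :
    cstep Vmem w θ (M ×ˢ Finset.univ ∪ newReps w θ M)
      = (mstep w θ M) ×ˢ Finset.univ := by
  set T := M ×ˢ (Finset.univ : Finset (Option (Fin k))) ∪ newReps w θ M with hT
  have hTsub : T ⊆ (mstep w θ M) ×ˢ Finset.univ := by
    refine Finset.union_subset ?_ (newReps_sub w θ M)
    exact Finset.product_subset_product Finset.subset_union_left (le_refl _)
  have hsum_eq : ∀ v : U, v ∉ mstep w θ M → ∀ c : Option (Fin k),
      ∑ y ∈ T, cliqueW Vmem w θ y (v, c)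
        = ∑ y ∈ M ×ˢ (Finset.univ : Finset (Option (Fin k))), cliqueW Vmem w θ y (v, c) := by
    intro v hv c
    refine (Finset.sum_subset Finset.subset_union_left ?_).symm
    intro y hyT hyM
    have hyN : y ∈ newReps w θ M := by
      rcases Finset.mem_union.mp hyT with h | h
      · exact absurd h hyM
      · exact h
    have := newReps_sub w θ M hyN
    rw [Finset.mem_product] at this
    have hy1 : y.1 ≠ v := fun h => hv (h ▸ this.1)
    simp only [newReps, Finset.mem_filter, Finset.mem_univ, true_and] at hyN
    obtain ⟨i, hc, _⟩ := hyN
    have : y = (y.1, some i) := by rw [← hc]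
    rw [this]
    exact cw_from_rep Vmem w θ y.1 i (v, c) hy1
  apply Finset.Subset.antisymm
  · -- cstep T ⊆ mstep M ×ˢ univ
    rintro ⟨v, c⟩ hx
    rcases Finset.mem_union.mp hx with h | h
    · exact hTsub h
    · rw [Finset.mem_filter] at h
      by_contra hvm
      have hv : v ∉ mstep w θ M := by
        intro hmem
        exact hvm (Finset.mem_product.mpr ⟨hmem, Finset.mem_univ _⟩)
      have hvM : v ∉ M := fun h' => hv (Finset.mem_union_left _ h')
      rw [hsum_eq v hv c] at h
      cases c with
      | none =>
        rw [sum_prod_gateway Vmem w θ M v hvM] at h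
        have : (1 : ℝ) ≤ 0 := by simpa [cliqueTheta] using h.2
        linarith
      | some i =>
        rw [sum_prod_rep Vmem w θ M v i hvM,
          theta_cond_iff Vmem w θ hwV hθpos M v i] at h
        exact hv (Finset.mem_union_right _
          (Finset.mem_filter.mpr ⟨Finset.mem_univ _, ⟨i, h.2⟩⟩))
  · -- mstep M ×ˢ univ ⊆ cstep T
    rintro ⟨v, c⟩ hx
    rw [Finset.mem_product] at hx
    rcases Finset.mem_union.mp hx.1 with hvM | hvF
    · exact Finset.mem_union_left _ (Finset.mem_union_left _
        (Finset.mem_product.mpr ⟨hvM, Finset.mem_univ _⟩))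
    · rw [Finset.mem_filter] at hvF
      obtain ⟨-, i, hle⟩ := hvF
      have hvi : (v, some i) ∈ T :=
        Finset.mem_union_right _
          (Finset.mem_filter.mpr ⟨Finset.mem_univ _, ⟨i, rfl, hle⟩⟩)
      by_cases hc : c = some i
      · exact Finset.mem_union_left _ (hc ▸ hvi)
      · refine Finset.mem_union_right _ (Finset.mem_filter.mpr ⟨Finset.mem_univ _, ?_⟩)
        have h1 : cliqueW Vmem w θ (v, some i) (v, c) = cliqueTheta Vmem θ (v, c) :=
          cw_same_user Vmem w θ v (some i) c (fun h => hc h.symm)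
        calc cliqueTheta Vmem θ (v, c)
            = cliqueW Vmem w θ (v, some i) (v, c) := h1.symm
          _ ≤ ∑ y ∈ T, cliqueW Vmem w θ y (v, c) :=
              Finset.single_le_sum (fun y _ => cw_nonneg Vmem w θ hw0 hθpos y (v, c)) hvi

include hw0 hθpos in
lemma cstep_seed (S : Finset U) :
    cstep Vmem w θ (S.image (fun s => (s, (none : Option (Fin k)))))
      = cstep Vmem w θ (S ×ˢ Finset.univ) := by
  have himg : S.image (fun s => (s, (none : Option (Fin k)))) ⊆ S ×ˢ Finset.univ := by
    intro x hx
    obtain ⟨s, hs, rfl⟩ := Finset.mem_image.mp hx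
    exact Finset.mem_product.mpr ⟨hs, Finset.mem_univ _⟩
  ext ⟨v, c⟩
  by_cases hv : v ∈ S
  · have hR : (v, c) ∈ cstep Vmem w θ (S ×ˢ Finset.univ) :=
      Finset.mem_union_left _ (Finset.mem_product.mpr ⟨hv, Finset.mem_univ _⟩)
    have hL : (v, c) ∈ cstep Vmem w θ (S.image (fun s => (s, (none : Option (Fin k))))) := by
      cases c with
      | none =>
        exact Finset.mem_union_left _ (Finset.mem_image.mpr ⟨v, hv, rfl⟩)
      | some j =>
        refine Finset.mem_union_right _ (Finset.mem_filter.mpr ⟨Finset.mem_univ _, ?_⟩)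
        have hmem : (v, (none : Option (Fin k))) ∈ S.image (fun s => (s, (none : Option (Fin k)))) :=
          Finset.mem_image.mpr ⟨v, hv, rfl⟩
        have h1 : cliqueW Vmem w θ (v, none) (v, some j) = cliqueTheta Vmem θ (v, some j) :=
          cw_same_user Vmem w θ v none (some j) (by simp)
        calc cliqueTheta Vmem θ (v, some j)
            = cliqueW Vmem w θ (v, none) (v, some j) := h1.symm
          _ ≤ ∑ y ∈ S.image (fun s => (s, (none : Option (Fin k)))),
                cliqueW Vmem w θ y (v, some j) :=
              Finset.single_le_sum (fun y _ => cw_nonneg Vmem w θ hw0 hθpos y _) hmem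
    simp [hL, hR]
  · have hsum : ∑ y ∈ S ×ˢ (Finset.univ : Finset (Option (Fin k))), cliqueW Vmem w θ y (v, c)
        = ∑ y ∈ S.image (fun s => (s, (none : Option (Fin k)))), cliqueW Vmem w θ y (v, c) := by
      refine (Finset.sum_subset himg ?_).symm
      intro y hyP hyI
      rw [Finset.mem_product] at hyP
      obtain ⟨u, c'⟩ := y
      cases c' with
      | none => exact absurd (Finset.mem_image.mpr ⟨u, hyP.1, rfl⟩) hyI
      | some j =>
        exact cw_from_rep Vmem w θ u j (v, c) (fun (h : u = v) => hv (h ▸ hyP.1))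
    have hnotimg : (v, c) ∉ S.image (fun s => (s, (none : Option (Fin k)))) := by
      intro h
      obtain ⟨s, hs, heq⟩ := Finset.mem_image.mp h
      have hsv : s = v := congrArg Prod.fst heq
      exact hv (hsv ▸ hs)
    have hnotprod : (v, c) ∉ S ×ˢ (Finset.univ : Finset (Option (Fin k))) := by
      intro h
      exact hv (Finset.mem_product.mp h).1
    simp only [cstep, Finset.mem_union, Finset.mem_filter, Finset.mem_univ, true_and,
      hnotimg, hnotprod, false_or, hsum]

include hw0 hwV hθpos in
lemma iterate2 (t : ℕ) (M : Finset U) :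
    (cstep Vmem w θ)^[2 * t] (M ×ˢ Finset.univ) = ((mstep w θ)^[t] M) ×ˢ Finset.univ := by
  induction t generalizing M with
  | zero => simp
  | succ t ih =>
    have h2 : 2 * (t + 1) = 2 * t + 2 := by ring
    rw [h2, Function.iterate_add_apply]
    have hstep2 : (cstep Vmem w θ)^[2] (M ×ˢ Finset.univ)
        = (mstep w θ M) ×ˢ Finset.univ := by
      show cstep Vmem w θ (cstep Vmem w θ (M ×ˢ Finset.univ)) = _
      rw [cstep_prod Vmem w θ hwV hθpos M, cstep2_prod Vmem w θ hw0 hwV hθpos M]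
    rw [hstep2, ih, Function.iterate_succ_apply]

end Aux


/-- **scale-up property of the clique lossless coupling, `c = k+1`.**
With the LT propagation on the multiplex system starting from `S` and on its clique
lossless coupled network starting from `S' = { s⁰ : s ∈ S }`, for every `d ≥ 1` the
number of active vertices in `G` after `2d` hops is exactly `(k+1)` times the number
of active users in `G^{1..k}` after `d` hops. -/
theorem lossless_scale_up
    {U : Type*} [Fintype U] [DecidableEq U] {k : ℕ} (hk : 1 ≤ k)
    (Vmem : Fin k → Finset U) (w : Fin k → U → U → ℝ) (θ : Fin k → U → ℝ)
    (hw0 : ∀ i v u, 0 ≤ w i v u)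
    (hwV : ∀ i v u, v ∉ Vmem i ∨ u ∉ Vmem i → w i v u = 0)
    (hθpos : ∀ i u, 0 < θ i u)
    (S : Finset U) (d : ℕ) (hd : 1 ≤ d) :
    (ltIter (cliqueW Vmem w θ) (cliqueTheta Vmem θ)
        (S.image (fun s => (s, (none : Option (Fin k))))) (2 * d)).card =
      (k + 1) * (multiIter w θ S d).card := by
  obtain ⟨e, rfl⟩ : ∃ e, d = e + 1 := ⟨d - 1, (Nat.succ_pred_eq_of_pos hd).symm⟩
  rw [ltIter_eq_iterate, multiIter_eq_iterate]
  have h1 : 2 * (e + 1) = (2 * e + 1) + 1 := by ring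
  rw [h1, Function.iterate_succ_apply]
  have hseed : cstep Vmem w θ (S.image (fun s => (s, (none : Option (Fin k)))))
      = cstep Vmem w θ (S ×ˢ Finset.univ) := cstep_seed Vmem w θ hw0 hθpos S
  rw [Function.iterate_succ_apply, hseed, Function.iterate_succ_apply,
    cstep_prod Vmem w θ hwV hθpos S, cstep2_prod Vmem w θ hw0 hwV hθpos S,
    iterate2 Vmem w θ hw0 hwV hθpos e (mstep w θ S),
    ← Function.iterate_succ_apply, Finset.card_product, Finset.card_univ,
    Fintype.card_option, Fintype.card_fin, mul_comm]
end

section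
/- Let 0 < β ≤ 1 and d ≥ 1. When the star lossless coupling scheme is used, a set S = {s_1,…,s_p} ⊆ U influences at least a β fraction of users in G^{1..k} after d propagation hops (i.e., |A^d(G^{1..k},S)| ≥ β·|U|) if and only if S' = {s_1^0,…,s_p^0} influences at least a β fraction of vertices in the coupled network G after 3d propagation hops (i.e., |A^{3d}(G,S')| ≥ β·|V| where |V| = (k+2)·|U|). -/
open scoped Classical

/-- Vertex indices of the star lossless coupled network: `gateway` is the gateway
vertex `u⁰`, `rep i` is the representative vertex `uⁱ` (`1 ≤ i ≤ k`), and `mid` is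
the intermediate synchronization vertex `u^{k+1}`. -/
inductive StarIdx (k : ℕ) where
  | gateway : StarIdx k
  | rep : Fin k → StarIdx k
  | mid : StarIdx k
  deriving DecidableEq, Fintype

/-- Thresholds of the star lossless coupled network: `θ(u⁰) = θ(u^{k+1}) = 1`;
`θ(uⁱ) = θ^i(u)` if `u ∈ V^i` and 1 otherwise. -/
noncomputable def starTheta {U : Type*} [DecidableEq U] {k : ℕ}
    (Vmem : Fin k → Finset U) (θ : Fin k → U → ℝ) : U × StarIdx k → ℝ
  | (_, .gateway) => 1
  | (_, .mid) => 1
  | (u, .rep i) => if u ∈ Vmem i then θ i u else 1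

/-- Edge weights of the star lossless coupled network:
`w(u⁰, vⁱ) = w^i(u, v)` for users `u ≠ v` and `1 ≤ i ≤ k`;
`w(uⁱ, u^{k+1}) = 1` and `w(u^{k+1}, uⁱ) = θ(uⁱ)` for `1 ≤ i ≤ k`;
`w(u^{k+1}, u⁰) = w(u⁰, u^{k+1}) = 1`; all other weights are 0. -/
noncomputable def starW {U : Type*} [DecidableEq U] {k : ℕ}
    (Vmem : Fin k → Finset U) (w : Fin k → U → U → ℝ) (θ : Fin k → U → ℝ) :
    U × StarIdx k → U × StarIdx k → ℝ :=
  fun x y =>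
    if x.1 = y.1 then
      match x.2, y.2 with
      | .rep _, .mid => 1
      | .mid, .rep _ => starTheta Vmem θ y
      | .mid, .gateway => 1
      | .gateway, .mid => 1
      | _, _ => 0
    else
      match x.2, y.2 with
      | .gateway, .rep i => w i x.1 y.1
      | _, _ => 0

/-! The coupled process simulates the multiplex one, three hops per multiplex hop. Suppose the
gateways of the users active at multiplex time `t` are active. In the next hop the representative
`uⁱ` of a user `u` fires exactly when layer `i` activates `u`: apart from `u`'s own synchronization
vertex, the only weight reaching `uⁱ` comes from active gateways and equals `w^i(·, u)`, and a
representative of a non-member of `V^i` has threshold 1 but receives no such weight. In the second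
hop the synchronization vertex of every such `u` fires, and in the third it activates the remaining
copies of `u`. Nothing else can fire, so for `d ≥ 1` (at time 0 only gateways are active) the
active set at time `3d` is exactly `A^d(G^{1..k}, S) × {0, …, k+1}`. -/

open Finset

section LinearThreshold

variable {V : Type*} [Fintype V] [DecidableEq V]

noncomputable def ltStep (w : V → V → ℝ) (θ : V → ℝ) (X : Finset V) : Finset V :=
  X ∪ univ.filter (fun x => θ x ≤ ∑ y ∈ X, w y x)

theorem ltIter_add_three (w : V → V → ℝ) (θ : V → ℝ) (S : Finset V) (n : ℕ) :
    ltIter w θ S (n + 3) = ltStep w θ (ltStep w θ (ltStep w θ (ltIter w θ S n))) :=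
  rfl

theorem mem_ltStep {w : V → V → ℝ} {θ : V → ℝ} {X : Finset V} {x : V} :
    x ∈ ltStep w θ X ↔ x ∈ X ∨ θ x ≤ ∑ y ∈ X, w y x := by
  simp [ltStep]

theorem subset_ltStep (w : V → V → ℝ) (θ : V → ℝ) (X : Finset V) : X ⊆ ltStep w θ X :=
  subset_union_left

theorem mem_ltStep_of_le_weight {w : V → V → ℝ} {θ : V → ℝ} {X : Finset V} {x y : V}
    (hw : ∀ z, 0 ≤ w z x) (hy : y ∈ X) (h : θ x ≤ w y x) : x ∈ ltStep w θ X :=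
  mem_ltStep.2 (Or.inr (h.trans (single_le_sum (fun z _ => hw z) hy)))

end LinearThreshold

section Multiplex

variable {U : Type*} {k : ℕ}

theorem mem_of_theta_le_sum (Vmem : Fin k → Finset U) (w : Fin k → U → U → ℝ)
    (θ : Fin k → U → ℝ) (hwV : ∀ i v u, v ∉ Vmem i ∨ u ∉ Vmem i → w i v u = 0)
    (hθpos : ∀ i u, 0 < θ i u) {A : Finset U} {u : U} {i : Fin k}
    (h : θ i u ≤ ∑ a ∈ A, w i a u) : u ∈ Vmem i := by
  by_contra hu
  rw [sum_eq_zero fun a _ => hwV i a u (Or.inr hu)] at h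
  exact (hθpos i u).not_ge h

variable [Fintype U] [DecidableEq U]

noncomputable def multiTriggered (w : Fin k → U → U → ℝ) (θ : Fin k → U → ℝ) (A : Finset U) :
    Finset U :=
  univ.filter (fun u => ∃ i : Fin k, θ i u ≤ ∑ v ∈ A, w i v u)

theorem multiIter_succ (w : Fin k → U → U → ℝ) (θ : Fin k → U → ℝ) (S : Finset U) (t : ℕ) :
    multiIter w θ S (t + 1) = multiIter w θ S t ∪ multiTriggered w θ (multiIter w θ S t) :=
  rfl

end Multiplex

section StarCopies

variable {U : Type*} [Fintype U] {k : ℕ}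

noncomputable def starCopies (g r m : Finset U) : Finset (U × StarIdx k) :=
  univ.filter fun x =>
    match x.2 with
    | .gateway => x.1 ∈ g
    | .rep _ => x.1 ∈ r
    | .mid => x.1 ∈ m

variable {g r m : Finset U} {u : U}

@[simp] theorem mk_gateway_mem_starCopies :
    (u, StarIdx.gateway) ∈ (starCopies g r m : Finset (U × StarIdx k)) ↔ u ∈ g := by
  simp [starCopies]

@[simp] theorem mk_rep_mem_starCopies {i : Fin k} :
    (u, StarIdx.rep i) ∈ (starCopies g r m : Finset (U × StarIdx k)) ↔ u ∈ r := by
  simp [starCopies]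

@[simp] theorem mk_mid_mem_starCopies :
    (u, StarIdx.mid) ∈ (starCopies g r m : Finset (U × StarIdx k)) ↔ u ∈ m := by
  simp [starCopies]

theorem starCopies_mono {g' r' m' : Finset U} (hg : g ⊆ g') (hr : r ⊆ r') (hm : m ⊆ m') :
    (starCopies g r m : Finset (U × StarIdx k)) ⊆ starCopies g' r' m' := by
  rintro ⟨u, _ | _ | _⟩ <;>
    simp only [mk_gateway_mem_starCopies, mk_rep_mem_starCopies, mk_mid_mem_starCopies]
  exacts [(hg ·), (hr ·), (hm ·)]

theorem starCopies_self (A : Finset U) :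
    (starCopies A A A : Finset (U × StarIdx k)) = A ×ˢ univ := by
  ext ⟨u, _ | _ | _⟩ <;> simp

end StarCopies

section StarCoupling

variable {U : Type*} [DecidableEq U] {k : ℕ}

def StarIdx.equivSumBool : StarIdx k ≃ Fin k ⊕ Bool where
  toFun
    | .gateway => .inr false
    | .mid => .inr true
    | .rep i => .inl i
  invFun
    | .inr false => .gateway
    | .inr true => .mid
    | .inl i => .rep i
  left_inv x := by cases x <;> rfl
  right_inv := by rintro (i | _ | _) <;> rfl

theorem StarIdx.card : Fintype.card (StarIdx k) = k + 2 := by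
  simp [Fintype.card_congr StarIdx.equivSumBool]

variable (Vmem : Fin k → Finset U) (w : Fin k → U → U → ℝ) (θ : Fin k → U → ℝ)

theorem starTheta_pos (hθpos : ∀ i u, 0 < θ i u) (x : U × StarIdx k) :
    0 < starTheta Vmem θ x := by
  obtain ⟨u, _ | i | _⟩ := x
  · exact one_pos
  · simp only [starTheta]
    split_ifs
    exacts [hθpos i u, one_pos]
  · exact one_pos

theorem starW_gateway (x : U × StarIdx k) (u : U) :
    starW Vmem w θ x (u, .gateway) = if x = (u, .mid) then 1 else 0 := by
  obtain ⟨a, j⟩ := x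
  by_cases h : a = u <;> cases j <;> simp [starW, h]

theorem starW_mid (x : U × StarIdx k) (u : U) :
    starW Vmem w θ x (u, .mid) = if x.1 = u ∧ x.2 ≠ .mid then 1 else 0 := by
  obtain ⟨a, j⟩ := x
  by_cases h : a = u <;> cases j <;> simp [starW, h]

theorem starW_rep (x : U × StarIdx k) (v : U) (i : Fin k) :
    starW Vmem w θ x (v, .rep i) =
      if x = (v, .mid) then starTheta Vmem θ (v, .rep i)
      else if x.2 = .gateway ∧ x.1 ≠ v then w i x.1 v else 0 := by
  obtain ⟨a, j⟩ := x
  by_cases h : a = v <;> cases j <;> simp [starW, h]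

theorem starW_gateway_rep (a v : U) (i : Fin k) :
    starW Vmem w θ (a, .gateway) (v, .rep i) = if a = v then 0 else w i a v := by
  by_cases h : a = v <;> simp [starW_rep, h]

theorem starW_nonneg (hw0 : ∀ i v u, 0 ≤ w i v u) (hθpos : ∀ i u, 0 < θ i u)
    (x y : U × StarIdx k) : 0 ≤ starW Vmem w θ x y := by
  obtain ⟨v, _ | i | _⟩ := y
  · rw [starW_gateway]; split_ifs <;> norm_num
  · rw [starW_rep]
    split_ifs
    exacts [(starTheta_pos Vmem θ hθpos _).le, hw0 _ _ _, le_rfl]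
  · rw [starW_mid]; split_ifs <;> norm_num

theorem sum_starW_gateway (X : Finset (U × StarIdx k)) (u : U) :
    ∑ y ∈ X, starW Vmem w θ y (u, .gateway) = if (u, .mid) ∈ X then 1 else 0 := by
  simp only [starW_gateway]
  exact sum_ite_eq' X _ _

theorem sum_starW_mid (X : Finset (U × StarIdx k)) (u : U) :
    ∑ y ∈ X, starW Vmem w θ y (u, .mid) = #{y ∈ X | y.1 = u ∧ y.2 ≠ .mid} := by
  simp only [starW_mid, sum_boole]

theorem sum_gateways_starW_rep (g : Finset U) (v : U) (i : Fin k) :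
    ∑ y ∈ g ×ˢ {.gateway}, starW Vmem w θ y (v, .rep i) =
      ∑ a ∈ g, if a = v then 0 else w i a v := by
  simp only [sum_product, sum_singleton, starW_gateway_rep]

theorem sum_starW_rep_le (hw0 : ∀ i v u, 0 ≤ w i v u) {X : Finset (U × StarIdx k)}
    {g : Finset U} (hg : ∀ a, (a, .gateway) ∈ X → a ∈ g) {v : U} (hv : (v, .mid) ∉ X)
    (i : Fin k) :
    ∑ y ∈ X, starW Vmem w θ y (v, .rep i) ≤ ∑ a ∈ g, w i a v := by
  calc ∑ y ∈ X, starW Vmem w θ y (v, .rep i)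
      = ∑ y ∈ X with y.2 = .gateway, starW Vmem w θ y (v, .rep i) := by
        refine (sum_filter_of_ne fun y hy hne => ?_).symm
        rw [starW_rep, if_neg (by rintro rfl; exact hv hy)] at hne
        by_contra h
        simp [h] at hne
    _ ≤ ∑ y ∈ g ×ˢ {.gateway}, starW Vmem w θ y (v, .rep i) := by
        refine sum_le_sum_of_subset_of_nonneg ?_ fun y hy _ => ?_
        · rintro ⟨a, j⟩ hy
          simp only [mem_filter] at hy
          obtain ⟨hy, rfl⟩ := hy
          simpa using hg a hy
        · obtain ⟨a, j⟩ := y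
          obtain ⟨-, rfl⟩ := by simpa using hy
          rw [starW_gateway_rep]
          split_ifs
          exacts [le_rfl, hw0 _ _ _]
    _ ≤ ∑ a ∈ g, w i a v := by
        rw [sum_gateways_starW_rep]
        exact sum_le_sum fun a _ => by split_ifs; exacts [hw0 _ _ _, le_rfl]

theorem le_sum_starW_rep (hw0 : ∀ i v u, 0 ≤ w i v u) (hθpos : ∀ i u, 0 < θ i u)
    {X : Finset (U × StarIdx k)} {A : Finset U} (hA : ∀ a ∈ A, (a, .gateway) ∈ X) {v : U}
    (hv : v ∉ A) (i : Fin k) :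
    ∑ a ∈ A, w i a v ≤ ∑ y ∈ X, starW Vmem w θ y (v, .rep i) := by
  calc ∑ a ∈ A, w i a v = ∑ y ∈ A ×ˢ {.gateway}, starW Vmem w θ y (v, .rep i) := by
        rw [sum_gateways_starW_rep]
        exact sum_congr rfl fun a ha => (if_neg (ne_of_mem_of_not_mem ha hv)).symm
    _ ≤ ∑ y ∈ X, starW Vmem w θ y (v, .rep i) := by
        refine sum_le_sum_of_subset_of_nonneg ?_ fun y _ _ =>
          starW_nonneg Vmem w θ hw0 hθpos _ _
        rintro ⟨a, j⟩ hy
        obtain ⟨ha, rfl⟩ := by simpa using hy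
        exact hA a ha

end StarCoupling

section StarDynamics

variable {U : Type*} [Fintype U] [DecidableEq U] {k : ℕ}
variable (Vmem : Fin k → Finset U) (w : Fin k → U → U → ℝ) (θ : Fin k → U → ℝ)

local notation "starStep" => ltStep (starW Vmem w θ) (starTheta Vmem θ)

variable {X : Finset (U × StarIdx k)} {u : U}

theorem mk_gateway_mem_ltStep_iff :
    (u, .gateway) ∈ starStep X ↔ (u, .gateway) ∈ X ∨ (u, .mid) ∈ X := by
  rw [mem_ltStep, sum_starW_gateway]
  split_ifs with h <;> simp [starTheta, h]

theorem mk_mid_mem_ltStep_iff : (u, .mid) ∈ starStep X ↔ ∃ j, (u, j) ∈ X := by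
  rw [mem_ltStep, sum_starW_mid]
  simp only [starTheta, Nat.one_le_cast, one_le_card, filter_nonempty_iff]
  constructor
  · rintro (h | ⟨⟨a, j⟩, hy, rfl, -⟩)
    exacts [⟨_, h⟩, ⟨j, hy⟩]
  · rintro ⟨j, hj⟩
    by_cases hmid : j = .mid
    · exact Or.inl (hmid ▸ hj)
    · exact Or.inr ⟨_, hj, rfl, hmid⟩

theorem mk_rep_mem_ltStep_of_mid (hw0 : ∀ i v u, 0 ≤ w i v u) (hθpos : ∀ i u, 0 < θ i u)
    (h : (u, .mid) ∈ X) (i : Fin k) : (u, .rep i) ∈ starStep X :=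
  mem_ltStep_of_le_weight (fun _ => starW_nonneg Vmem w θ hw0 hθpos _ _) h
    (by rw [starW_rep, if_pos rfl])

theorem mk_rep_mem_ltStep_of_le (hw0 : ∀ i v u, 0 ≤ w i v u) (hθpos : ∀ i u, 0 < θ i u)
    {A : Finset U} (hA : ∀ a ∈ A, (a, .gateway) ∈ X) (hu : u ∉ A) {i : Fin k}
    (huV : u ∈ Vmem i) (h : θ i u ≤ ∑ a ∈ A, w i a u) : (u, .rep i) ∈ starStep X := by
  refine mem_ltStep.2 (Or.inr ?_)
  rw [show starTheta Vmem θ (u, .rep i) = θ i u from if_pos huV]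
  exact h.trans (le_sum_starW_rep Vmem w θ hw0 hθpos hA hu i)

theorem mk_rep_mem_ltStep_cases (hw0 : ∀ i v u, 0 ≤ w i v u)
    (hwV : ∀ i v u, v ∉ Vmem i ∨ u ∉ Vmem i → w i v u = 0) {g : Finset U}
    (hg : ∀ a, (a, .gateway) ∈ X → a ∈ g) {i : Fin k} (h : (u, .rep i) ∈ starStep X) :
    (u, .rep i) ∈ X ∨ (u, .mid) ∈ X ∨ u ∈ multiTriggered w θ g := by
  refine (mem_ltStep.1 h).imp_right fun hle => or_iff_not_imp_left.2 fun hmid => ?_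
  have hsum := hle.trans (sum_starW_rep_le Vmem w θ hw0 hg hmid i)
  by_cases huV : u ∈ Vmem i
  · rw [show starTheta Vmem θ (u, .rep i) = θ i u from if_pos huV] at hsum
    simpa [multiTriggered] using ⟨i, hsum⟩
  · rw [show starTheta Vmem θ (u, .rep i) = 1 from if_neg huV,
      sum_eq_zero fun a _ => hwV i a u (Or.inr huV)] at hsum
    norm_num at hsum

theorem ltStep_starW_subset (hw0 : ∀ i v u, 0 ≤ w i v u)
    (hwV : ∀ i v u, v ∉ Vmem i ∨ u ∉ Vmem i → w i v u = 0) {g r m : Finset U}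
    (hX : X ⊆ starCopies g r m) :
    starStep X ⊆ starCopies (g ∪ m) (r ∪ m ∪ multiTriggered w θ g) (g ∪ r ∪ m) := by
  have hg : ∀ a, (a, .gateway) ∈ X → a ∈ g := fun a ha => by simpa using hX ha
  rintro ⟨u, _ | i | _⟩ hx
  · rcases (mk_gateway_mem_ltStep_iff Vmem w θ).1 hx with h | h <;> simp [by simpa using hX h]
  · rcases mk_rep_mem_ltStep_cases Vmem w θ hw0 hwV hg hx with h | h | h
    · simp [by simpa using hX h]
    · simp [by simpa using hX h]
    · simp [h]
  · obtain ⟨j, h⟩ := (mk_mid_mem_ltStep_iff Vmem w θ).1 hx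
    cases j <;> simp [by simpa using hX h]

theorem ltStep_three_starW_subset (hw0 : ∀ i v u, 0 ≤ w i v u)
    (hwV : ∀ i v u, v ∉ Vmem i ∨ u ∉ Vmem i → w i v u = 0) {A B : Finset U} (hAB : A ⊆ B)
    (hTB : multiTriggered w θ A ⊆ B) (hX : X ⊆ starCopies A A A) :
    starStep (starStep (starStep X)) ⊆ starCopies B B B := by
  have step {g r m g' r' m' : Finset U} {Y : Finset (U × StarIdx k)}
      (hY : Y ⊆ starCopies g r m) (hg : g ∪ m ⊆ g') (hr : r ∪ m ∪ multiTriggered w θ g ⊆ r')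
      (hm : g ∪ r ∪ m ⊆ m') : starStep Y ⊆ starCopies g' r' m' :=
    (ltStep_starW_subset Vmem w θ hw0 hwV hY).trans (starCopies_mono hg hr hm)
  have h1 : starStep X ⊆ starCopies A B A :=
    step hX (by simp) (by simp [union_subset_iff, hAB, hTB]) (by simp)
  have h2 : starStep (starStep X) ⊆ starCopies A B B :=
    step h1 (by simp) (by simp [union_subset_iff, hAB, hTB]) (by simp [union_subset_iff, hAB])
  exact step h2 (by simp [union_subset_iff, hAB]) (by simp [union_subset_iff, hTB])
    (by simp [union_subset_iff, hAB])

theorem starCopies_subset_ltStep_three (hw0 : ∀ i v u, 0 ≤ w i v u)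
    (hwV : ∀ i v u, v ∉ Vmem i ∨ u ∉ Vmem i → w i v u = 0) (hθpos : ∀ i u, 0 < θ i u)
    {A B : Finset U} (hB : B ⊆ A ∪ multiTriggered w θ A) (hX : ∀ a ∈ A, (a, .gateway) ∈ X) :
    starCopies B B B ⊆ starStep (starStep (starStep X)) := by
  have hrep : ∀ u ∈ multiTriggered w θ A, u ∉ A → ∃ i : Fin k, (u, .rep i) ∈ starStep X := by
    intro u hu huA
    obtain ⟨i, hi⟩ : ∃ i, θ i u ≤ ∑ a ∈ A, w i a u := by simpa [multiTriggered] using hu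
    exact ⟨i, mk_rep_mem_ltStep_of_le Vmem w θ hw0 hθpos hX huA
      (mem_of_theta_le_sum Vmem w θ hwV hθpos hi) hi⟩
  have hmid : ∀ u ∈ B, (u, .mid) ∈ starStep (starStep X) := by
    intro u hu
    by_cases huA : u ∈ A
    · exact subset_ltStep _ _ _ ((mk_mid_mem_ltStep_iff Vmem w θ).2 ⟨_, hX u huA⟩)
    · obtain ⟨i, hi⟩ := hrep u ((mem_union.1 (hB hu)).resolve_left huA) huA
      exact (mk_mid_mem_ltStep_iff Vmem w θ).2 ⟨_, hi⟩
  rintro ⟨u, _ | i | _⟩ hu <;> simp only [mk_gateway_mem_starCopies, mk_rep_mem_starCopies,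
    mk_mid_mem_starCopies] at hu
  · exact (mk_gateway_mem_ltStep_iff Vmem w θ).2 (Or.inr (hmid u hu))
  · exact mk_rep_mem_ltStep_of_mid Vmem w θ hw0 hθpos (hmid u hu) i
  · exact subset_ltStep _ _ _ (hmid u hu)

variable (S : Finset U)

local notation "starIter" =>
  ltIter (starW Vmem w θ) (starTheta Vmem θ) (S.image fun s => (s, StarIdx.gateway))

theorem ltIter_starW_subset (hw0 : ∀ i v u, 0 ≤ w i v u)
    (hwV : ∀ i v u, v ∉ Vmem i ∨ u ∉ Vmem i → w i v u = 0) (t : ℕ) :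
    starIter (3 * t) ⊆
      starCopies (multiIter w θ S t) (multiIter w θ S t) (multiIter w θ S t) := by
  induction t with
  | zero =>
    intro x hx
    obtain ⟨s, hs, rfl⟩ := mem_image.1 hx
    exact mk_gateway_mem_starCopies.2 hs
  | succ t ih =>
    rw [Nat.mul_succ, ltIter_add_three, multiIter_succ]
    exact ltStep_three_starW_subset Vmem w θ hw0 hwV subset_union_left subset_union_right ih

theorem mk_gateway_mem_ltIter_starW (hw0 : ∀ i v u, 0 ≤ w i v u)
    (hwV : ∀ i v u, v ∉ Vmem i ∨ u ∉ Vmem i → w i v u = 0) (hθpos : ∀ i u, 0 < θ i u)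
    (t : ℕ) : ∀ u ∈ multiIter w θ S t, (u, .gateway) ∈ starIter (3 * t) := by
  induction t with
  | zero => exact fun u hu => mem_image_of_mem _ hu
  | succ t ih =>
    intro u hu
    rw [Nat.mul_succ, ltIter_add_three]
    exact starCopies_subset_ltStep_three Vmem w θ hw0 hwV hθpos
      (multiIter_succ w θ S t).subset ih (mk_gateway_mem_starCopies.2 hu)

theorem ltIter_starW_three_mul_succ (hw0 : ∀ i v u, 0 ≤ w i v u)
    (hwV : ∀ i v u, v ∉ Vmem i ∨ u ∉ Vmem i → w i v u = 0) (hθpos : ∀ i u, 0 < θ i u)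
    (t : ℕ) : starIter (3 * (t + 1)) = multiIter w θ S (t + 1) ×ˢ univ := by
  rw [← starCopies_self]
  refine (ltIter_starW_subset Vmem w θ S hw0 hwV _).antisymm ?_
  rw [Nat.mul_succ, ltIter_add_three]
  exact starCopies_subset_ltStep_three Vmem w θ hw0 hwV hθpos (multiIter_succ w θ S t).subset
    (mk_gateway_mem_ltIter_starW Vmem w θ S hw0 hwV hθpos t)

end StarDynamics

theorem star_beta_fraction_iff_general
    {U : Type*} [Fintype U] [DecidableEq U] {k : ℕ}
    (Vmem : Fin k → Finset U) (w : Fin k → U → U → ℝ) (θ : Fin k → U → ℝ)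
    (hw0 : ∀ i v u, 0 ≤ w i v u)
    (hwV : ∀ i v u, v ∉ Vmem i ∨ u ∉ Vmem i → w i v u = 0)
    (hθpos : ∀ i u, 0 < θ i u)
    (β : ℝ)
    (S : Finset U) (d : ℕ) (hd : 1 ≤ d) :
    β * (Fintype.card U : ℝ) ≤ ((multiIter w θ S d).card : ℝ) ↔
      β * (((k + 2) * Fintype.card U : ℕ) : ℝ) ≤
        ((ltIter (starW Vmem w θ) (starTheta Vmem θ)
            (S.image (fun s => (s, (StarIdx.gateway : StarIdx k)))) (3 * d)).card : ℝ) := by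
  obtain ⟨t, rfl⟩ : ∃ t, d = t + 1 := ⟨d - 1, by omega⟩
  rw [ltIter_starW_three_mul_succ Vmem w θ S hw0 hwV hθpos, card_product, card_univ,
    StarIdx.card]
  push_cast
  rw [mul_left_comm, mul_comm _ ((k : ℝ) + 2), mul_le_mul_iff_of_pos_left (by positivity)]

/-- **Theorem 3.** With the star lossless coupling scheme, a seed set
`S ⊆ U` influences at least a `β` fraction of the users of `G^{1..k}` after `d` hops
iff `S' = { s⁰ : s ∈ S }` influences at least a `β` fraction of the vertices of the
coupled network `G` (of which there are `|V| = (k+2)·|U|`) after `3d` hops. -/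
theorem star_beta_fraction_iff
    {U : Type*} [Fintype U] [DecidableEq U] {k : ℕ} (hk : 1 ≤ k)
    (Vmem : Fin k → Finset U) (w : Fin k → U → U → ℝ) (θ : Fin k → U → ℝ)
    (hw0 : ∀ i v u, 0 ≤ w i v u)
    (hwV : ∀ i v u, v ∉ Vmem i ∨ u ∉ Vmem i → w i v u = 0)
    (hθpos : ∀ i u, 0 < θ i u)
    (β : ℝ) (hβ0 : 0 < β) (hβ1 : β ≤ 1)
    (S : Finset U) (d : ℕ) (hd : 1 ≤ d) :
    β * (Fintype.card U : ℝ) ≤ ((multiIter w θ S d).card : ℝ) ↔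
      β * (((k + 2) * Fintype.card U : ℕ) : ℝ) ≤
        ((ltIter (starW Vmem w θ) (starTheta Vmem θ)
            (S.image (fun s => (s, (StarIdx.gateway : StarIdx k)))) (3 * d)).card : ℝ) :=
  star_beta_fraction_iff_general Vmem w θ hw0 hwV hθpos β S d hd
end

section
/- Let the LT propagation on the multiplex system G^{1..k} and on its lossy coupled network G_α start from the same seed set S ⊆ U. Then for every t ≥ 0, every user active after t hops in G_α is active after t hops in G^{1..k}: A^t(G_α,S) ⊆ A^t(G^{1..k},S). -/
open scoped Classical

/-- If the LT propagation on the multiplex system `G^{1..k}` and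
on its lossy coupled network `G_α` — vertex set `U`, thresholds
`θ(u) = Σ_i α^i(u)·θ^i(u)`, weights `w(v,u) = Σ_i α^i(u)·w^i(v,u)` with positive
parameters `α^i(u)` — start from the same seed set `S`, then for every `t ≥ 0` every
user active after `t` hops in `G_α` is active after `t` hops in `G^{1..k}`. -/
theorem lossy_active_subset
    {U : Type*} [Fintype U] [DecidableEq U] {k : ℕ} (hk : 1 ≤ k)
    (Vmem : Fin k → Finset U) (w : Fin k → U → U → ℝ) (θ : Fin k → U → ℝ)
    (hw0 : ∀ i v u, 0 ≤ w i v u)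
    (hwV : ∀ i v u, v ∉ Vmem i ∨ u ∉ Vmem i → w i v u = 0)
    (hθpos : ∀ i u, 0 < θ i u)
    (α : Fin k → U → ℝ) (hα : ∀ i u, 0 < α i u)
    (S : Finset U) (t : ℕ) :
    ltIter (fun v u => ∑ i : Fin k, α i u * w i v u)
        (fun u => ∑ i : Fin k, α i u * θ i u) S t ⊆
      multiIter w θ S t := by
  induction t with
  | zero => simp [ltIter, multiIter]
  | succ t ih =>
    rw [ltIter, multiIter]
    intro x hx
    rcases Finset.mem_union.mp hx with h | h
    · exact Finset.mem_union_left _ (ih h)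
    · refine Finset.mem_union_right _ ?_
      simp only [Finset.mem_filter, Finset.mem_univ, true_and] at h ⊢
      by_contra hc
      push_neg at hc
      have hsum : ∀ i : Fin k,
          ∑ y ∈ ltIter (fun v u => ∑ i : Fin k, α i u * w i v u)
            (fun u => ∑ i : Fin k, α i u * θ i u) S t, w i y x
            < θ i x := fun i =>
        lt_of_le_of_lt (Finset.sum_le_sum_of_subset_of_nonneg ih
          (fun y _ _ => hw0 i y x)) (hc i)
      have hlt : ∑ y ∈ ltIter (fun v u => ∑ i : Fin k, α i u * w i v u)
            (fun u => ∑ i : Fin k, α i u * θ i u) S t,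
            ∑ i : Fin k, α i x * w i y x
          < ∑ i : Fin k, α i x * θ i x := by
        rw [Finset.sum_comm]
        refine Finset.sum_lt_sum_of_nonempty ?_ (fun i _ => ?_)
        · exact Finset.univ_nonempty_iff.mpr (Fin.pos_iff_nonempty.mp hk)
        · rw [← Finset.mul_sum]
          exact mul_lt_mul_of_pos_left (hsum i) (hα i x)
      exact absurd h (not_le.mpr hlt)
end

section
/- Let 0 < β ≤ 1 and d ≥ 0. When the lossy coupling scheme is used (with any positive parameters α^i(u)), if a set S ⊆ U activates at least a β fraction of the users in the lossy coupled network G_α after d hops (i.e., |A^d(G_α,S)| ≥ β·|U|), then S activates at least a β fraction of users in the multiplex system G^{1..k} after d hops (i.e., |A^d(G^{1..k},S)| ≥ β·|U|); in particular, any feasible seed set for the Least Cost Influence problem on G_α is a feasible seed set for the Least Cost Influence problem on G^{1..k}. -/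
open scoped Classical

lemma lossy_subset
    {U : Type*} [Fintype U] [DecidableEq U] {k : ℕ} (hk : 1 ≤ k)
    (w : Fin k → U → U → ℝ) (θ : Fin k → U → ℝ)
    (hw0 : ∀ i v u, 0 ≤ w i v u)
    (α : Fin k → U → ℝ) (hα : ∀ i u, 0 < α i u)
    (S : Finset U) (d : ℕ) :
    ltIter (fun v u => ∑ i : Fin k, α i u * w i v u)
        (fun u => ∑ i : Fin k, α i u * θ i u) S d ⊆ multiIter w θ S d := by
  induction d with
  | zero => simp [ltIter, multiIter]
  | succ t ih =>
      intro u hu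
      rw [ltIter] at hu
      rw [multiIter]
      rcases Finset.mem_union.mp hu with hu | hu
      · exact Finset.mem_union_left _ (ih hu)
      · refine Finset.mem_union_right _ (Finset.mem_filter.mpr ⟨Finset.mem_univ _, ?_⟩)
        have hu' := (Finset.mem_filter.mp hu).2
        set A := ltIter (fun v u => ∑ i : Fin k, α i u * w i v u)
            (fun u => ∑ i : Fin k, α i u * θ i u) S t with hA
        by_contra hcon
        push_neg at hcon
        have hlt : ∀ i : Fin k, ∑ v ∈ A, w i v u < θ i u := by
          intro i
          refine lt_of_le_of_lt ?_ (hcon i)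
          exact Finset.sum_le_sum_of_subset_of_nonneg ih (fun v _ _ => hw0 i v u)
        have hstrict : ∑ i : Fin k, α i u * (∑ v ∈ A, w i v u)
            < ∑ i : Fin k, α i u * θ i u := by
          refine Finset.sum_lt_sum_of_nonempty ?_ ?_
          · have : Nonempty (Fin k) := ⟨⟨0, hk⟩⟩
            exact Finset.univ_nonempty
          · intro i _
            exact mul_lt_mul_of_pos_left (hlt i) (hα i u)
        have hswap : ∑ v ∈ A, ∑ i : Fin k, α i u * w i v u
            = ∑ i : Fin k, α i u * (∑ v ∈ A, w i v u) := by
          rw [Finset.sum_comm]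
          simp [Finset.mul_sum]
        rw [hswap] at hu'
        linarith

/-- **Theorem 5.** With the lossy coupling scheme (any positive
parameters `α^i(u)`), if a seed set `S ⊆ U` activates at least a `β` fraction of the
users in the lossy coupled network `G_α` after `d` hops, then `S` activates at least
a `β` fraction of the users in the multiplex system `G^{1..k}` after `d` hops; in
particular, any feasible seed set for LCI on `G_α` is feasible for LCI on
`G^{1..k}`. -/
theorem lossy_beta_fraction
    {U : Type*} [Fintype U] [DecidableEq U] {k : ℕ} (hk : 1 ≤ k)
    (Vmem : Fin k → Finset U) (w : Fin k → U → U → ℝ) (θ : Fin k → U → ℝ)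
    (hw0 : ∀ i v u, 0 ≤ w i v u)
    (hwV : ∀ i v u, v ∉ Vmem i ∨ u ∉ Vmem i → w i v u = 0)
    (hθpos : ∀ i u, 0 < θ i u)
    (α : Fin k → U → ℝ) (hα : ∀ i u, 0 < α i u)
    (β : ℝ) (hβ0 : 0 < β) (hβ1 : β ≤ 1)
    (S : Finset U) (d : ℕ)
    (h : β * (Fintype.card U : ℝ) ≤
        ((ltIter (fun v u => ∑ i : Fin k, α i u * w i v u)
            (fun u => ∑ i : Fin k, α i u * θ i u) S d).card : ℝ)) :
    β * (Fintype.card U : ℝ) ≤ ((multiIter w θ S d).card : ℝ) := by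
  refine le_trans h ?_
  exact_mod_cast Finset.card_le_card (lossy_subset hk w θ hw0 α hα S d)
end
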